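/- Let Q be a based groupoid quantale over a frame A, and let X be a stably supported Q-module. Suppose x ∈ X and b ∈ A satisfy: (1) b▹1_X ≤ ⟨x,x⟩·1_X, and (2) b▹x = x. Then b = ς_X(x). -/

import Mathlib

/-- A based groupoid quantale over a frame `A`: a frame `Q` (with top `1_Q`)
equipped with a sup-preserving associative multiplication, an involution,
unital left/right `A`-actions and an equivariant support `ς_Q : Q → A`. -/
structure BasedGroupoidQuantale (A : Type*) (Q : Type*)
    [Order.Frame A] [Order.Frame Q] where
  mul : Q → Q → Q
  star : Q → Q
  lres : A → Q → Q          -- `a ▹ q`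
  rres : Q → A → Q          -- `q ◃ a`
  suppQ : Q → A             -- `ς_Q`
  mul_assoc : ∀ p q r, mul (mul p q) r = mul p (mul q r)
  mul_sSup_left : ∀ (S : Set Q) (q : Q), mul (sSup S) q = ⨆ p ∈ S, mul p q
  mul_sSup_right : ∀ (p : Q) (S : Set Q), mul p (sSup S) = ⨆ q ∈ S, mul p q
  star_star : ∀ q, star (star q) = q
  star_mul : ∀ p q, star (mul p q) = mul (star q) (star p)
  star_sSup : ∀ (S : Set Q), star (sSup S) = ⨆ q ∈ S, star q
  lres_top_act : ∀ q, lres ⊤ q = q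
  rres_top_act : ∀ q, rres q ⊤ = q
  lres_sSup_left : ∀ (S : Set A) (q : Q), lres (sSup S) q = ⨆ a ∈ S, lres a q
  lres_sSup_right : ∀ (a : A) (S : Set Q), lres a (sSup S) = ⨆ q ∈ S, lres a q
  rres_sSup_left : ∀ (S : Set Q) (a : A), rres (sSup S) a = ⨆ q ∈ S, rres q a
  rres_sSup_right : ∀ (q : Q) (S : Set A), rres q (sSup S) = ⨆ a ∈ S, rres q a
  lres_lres : ∀ a b q, lres a (lres b q) = lres (a ⊓ b) q
  lres_rres_comm : ∀ a q b, rres (lres a q) b = lres a (rres q b)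
  lres_mul : ∀ a p q, mul (lres a p) q = lres a (mul p q)
  rres_mul : ∀ p a q, mul (rres p a) q = mul p (lres a q)
  mul_rres : ∀ p q a, rres (mul p q) a = mul p (rres q a)
  star_lres_rres : ∀ a q b, star (lres a (rres q b)) = lres b (rres (star q) a)
  lres_inf : ∀ a q m, lres a q ⊓ m = lres a (q ⊓ m)
  inf_rres : ∀ m q a, m ⊓ rres q a = rres (q ⊓ m) a
  suppQ_sSup : ∀ (S : Set Q), suppQ (sSup S) = ⨆ q ∈ S, suppQ q
  suppQ_top : suppQ ⊤ = ⊤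
  suppQ_le_mul : ∀ q p, lres (suppQ q) p ≤ mul (mul q (star q)) p
  suppQ_lres : ∀ q, lres (suppQ q) q = q
  suppQ_equivariant : ∀ a q, suppQ (lres a q) = a ⊓ suppQ q

/-- A pre-Hilbert `Q`-module: a frame `X` (with top `1_X`) with a sup-preserving
`Q`-action and a unital left `A`-action, equipped with an inner product. -/
structure PreHilbertModule {A Q : Type*} [Order.Frame A] [Order.Frame Q]
    (GQ : BasedGroupoidQuantale A Q) (X : Type*) [Order.Frame X] where
  smul : Q → X → X          -- `q · x`
  lres : A → X → X          -- `a ▹ x`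
  inner : X → X → Q         -- `⟨x, y⟩`
  smul_sSup_left : ∀ (S : Set Q) (x : X), smul (sSup S) x = ⨆ q ∈ S, smul q x
  smul_sSup_right : ∀ (q : Q) (S : Set X), smul q (sSup S) = ⨆ x ∈ S, smul q x
  mul_smul : ∀ p q x, smul (GQ.mul p q) x = smul p (smul q x)
  lres_top_act : ∀ x, lres ⊤ x = x
  lres_sSup_left : ∀ (S : Set A) (x : X), lres (sSup S) x = ⨆ a ∈ S, lres a x
  lres_sSup_right : ∀ (a : A) (S : Set X), lres a (sSup S) = ⨆ x ∈ S, lres a x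
  lres_lres : ∀ a b x, lres a (lres b x) = lres (a ⊓ b) x
  lresQ_smul : ∀ a q x, smul (GQ.lres a q) x = lres a (smul q x)
  rresQ_smul : ∀ q a x, smul (GQ.rres q a) x = smul q (lres a x)
  lres_inf : ∀ a (x y : X), lres a (x ⊓ y) = lres a x ⊓ y
  inner_smul : ∀ q x y, inner (smul q x) y = GQ.mul q (inner x y)
  lres_inner : ∀ a x, GQ.lres a (inner x ⊤) = inner (lres a x) ⊤
  inner_sSup : ∀ (S : Set X) (y : X), inner (sSup S) y = ⨆ x ∈ S, inner x y
  inner_star : ∀ x y, inner x y = GQ.star (inner y x)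

/-!
Both `b` and `ς_X(x)` satisfy the two hypotheses, so it suffices to show that any such `b`
equals `ς_Q⟨x, 1⟩`. From `b ▹ x = x` we get `⟨x, 1⟩ = b ▹ ⟨x, 1⟩`, hence `ς_Q⟨x, 1⟩ ≤ b` by
equivariance. Stability of `ς_X` at `⟨1, 1⟩ · 1 = 1` gives `ς_Q⟨1, 1⟩ = 1`; pairing
`b ▹ 1 ≤ ⟨x, x⟩ · 1` with `1` yields `b ▹ ⟨1, 1⟩ ≤ ⟨x, x⟩⟨1, 1⟩`, so equivariance and
stability of `ς_Q` give `b ≤ ς_Q⟨x, x⟩ ≤ ς_Q⟨x, 1⟩`.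
-/

theorem monotone_of_map_sSup {α β : Type*} [CompleteLattice α] [CompleteLattice β]
    {f : α → β} (hf : ∀ S : Set α, f (sSup S) = ⨆ a ∈ S, f a) : Monotone f := by
  intro a b hab
  have hpair := hf {a, b}
  rw [sSup_pair, sup_eq_right.mpr hab, iSup_pair] at hpair
  exact le_sup_left.trans hpair.ge

namespace BasedGroupoidQuantale

variable {A Q : Type*} [Order.Frame A] [Order.Frame Q] (GQ : BasedGroupoidQuantale A Q)

theorem suppQ_mono : Monotone GQ.suppQ :=
  monotone_of_map_sSup GQ.suppQ_sSup

theorem star_mono : Monotone GQ.star :=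
  monotone_of_map_sSup GQ.star_sSup

theorem suppQ_le_of_lres_eq {a : A} {q : Q} (h : GQ.lres a q = q) : GQ.suppQ q ≤ a := by
  rw [← h, GQ.suppQ_equivariant]
  exact inf_le_left

end BasedGroupoidQuantale

namespace PreHilbertModule

variable {A Q X : Type*} [Order.Frame A] [Order.Frame Q] [Order.Frame X]
  {GQ : BasedGroupoidQuantale A Q} (M : PreHilbertModule GQ X)

theorem inner_mono_left (z : X) : Monotone (M.inner · z) :=
  monotone_of_map_sSup fun S => M.inner_sSup S z

theorem inner_mono_right (z : X) : Monotone (M.inner z ·) := by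
  intro x y hxy
  dsimp only
  rw [M.inner_star z x, M.inner_star z y]
  exact GQ.star_mono (M.inner_mono_left z hxy)

theorem inner_le_inner_top (x y : X) : M.inner x y ≤ M.inner x ⊤ :=
  M.inner_mono_right x le_top

theorem suppQ_inner_top_le {a : A} {x : X} (h : M.lres a x = x) :
    GQ.suppQ (M.inner x ⊤) ≤ a :=
  GQ.suppQ_le_of_lres_eq (by rw [M.lres_inner, h])

theorem suppQ_inner_top_top_of_stable {ς : X → A} (hς_top : ς ⊤ = ⊤)
    (hς_le : M.lres (ς ⊤) ⊤ ≤ M.smul (M.inner ⊤ ⊤) ⊤)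
    (hς_stable : ∀ (q : Q) (x : X), ς (M.smul q x) ≤ GQ.suppQ q) :
    GQ.suppQ (M.inner ⊤ ⊤) = ⊤ := by
  have hsmul : M.smul (M.inner ⊤ ⊤) ⊤ = ⊤ := by
    rw [hς_top, M.lres_top_act] at hς_le
    exact top_le_iff.mp hς_le
  simpa only [hsmul, hς_top, top_le_iff] using hς_stable (M.inner ⊤ ⊤) ⊤

theorem le_suppQ_inner_self
    (hstable : ∀ p q : Q, GQ.suppQ (GQ.mul p q) ≤ GQ.suppQ p)
    (htop : GQ.suppQ (M.inner ⊤ ⊤) = ⊤) {a : A} {x : X}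
    (h : M.lres a ⊤ ≤ M.smul (M.inner x x) ⊤) : a ≤ GQ.suppQ (M.inner x x) := by
  have hpair : GQ.lres a (M.inner ⊤ ⊤) ≤ GQ.mul (M.inner x x) (M.inner ⊤ ⊤) := by
    rw [M.lres_inner, ← M.inner_smul]
    exact M.inner_mono_left ⊤ h
  calc a = GQ.suppQ (GQ.lres a (M.inner ⊤ ⊤)) := by
        rw [GQ.suppQ_equivariant, htop, inf_top_eq]
    _ ≤ GQ.suppQ (GQ.mul (M.inner x x) (M.inner ⊤ ⊤)) := GQ.suppQ_mono hpair
    _ ≤ GQ.suppQ (M.inner x x) := hstable _ _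

theorem eq_suppQ_inner_top
    (hstable : ∀ p q : Q, GQ.suppQ (GQ.mul p q) ≤ GQ.suppQ p)
    (htop : GQ.suppQ (M.inner ⊤ ⊤) = ⊤) {a : A} {x : X}
    (h₁ : M.lres a ⊤ ≤ M.smul (M.inner x x) ⊤) (h₂ : M.lres a x = x) :
    a = GQ.suppQ (M.inner x ⊤) :=
  le_antisymm
    ((M.le_suppQ_inner_self hstable htop h₁).trans (GQ.suppQ_mono (M.inner_le_inner_top x x)))
    (M.suppQ_inner_top_le h₂)

end PreHilbertModule

theorem stably_supported_supp_characterization_general {A Q X : Type*}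
    [Order.Frame A] [Order.Frame Q] [Order.Frame X]
    (GQ : BasedGroupoidQuantale A Q) (M : PreHilbertModule GQ X)
    (hQ_stable : ∀ p q : Q, GQ.suppQ (GQ.mul p q) ≤ GQ.suppQ p)
    (ς : X → A) (hς_top : ς ⊤ = ⊤)
    (hς_le : ∀ x, M.lres (ς x) ⊤ ≤ M.smul (M.inner x x) ⊤)
    (hς_restrict : ∀ x, M.lres (ς x) x = x)
    (hς_stable : ∀ (q : Q) (x : X), ς (M.smul q x) ≤ GQ.suppQ q)
    (x : X) (b : A)
    (h1 : M.lres b ⊤ ≤ M.smul (M.inner x x) ⊤)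
    (h2 : M.lres b x = x) :
    b = ς x := by
  have htop := M.suppQ_inner_top_top_of_stable hς_top (hς_le ⊤) hς_stable
  rw [M.eq_suppQ_inner_top hQ_stable htop h1 h2,
    M.eq_suppQ_inner_top hQ_stable htop (hς_le x) (hς_restrict x)]

/-- Lemma 4.4: in a stably supported `Q`-module, if `b▹1_X ≤ ⟨x,x⟩·1_X` and
`b▹x = x`, then `b = ς_X(x)`. -/
theorem stably_supported_supp_characterization {A Q X : Type*}
    [Order.Frame A] [Order.Frame Q] [Order.Frame X]
    (GQ : BasedGroupoidQuantale A Q) (M : PreHilbertModule GQ X)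
    (hQ_stable : ∀ p q : Q, GQ.suppQ (GQ.mul p q) ≤ GQ.suppQ p)
    (ς : X → A) (hmono : Monotone ς) (hς_top : ς ⊤ = ⊤)
    (hς_le : ∀ x, M.lres (ς x) ⊤ ≤ M.smul (M.inner x x) ⊤)
    (hς_restrict : ∀ x, M.lres (ς x) x = x)
    (hς_stable : ∀ (q : Q) (x : X), ς (M.smul q x) ≤ GQ.suppQ q)
    (x : X) (b : A)
    (h1 : M.lres b ⊤ ≤ M.smul (M.inner x x) ⊤)
    (h2 : M.lres b x = x) :
    b = ς x :=
  stably_supported_supp_characterization_general GQ M hQ_stable ς hς_top hς_le hς_restrict hς_stable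
    x b h1 h2
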